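/- The Huber quantile loss is globally Lipschitz: for τ ∈ (0,1), κ > 0, and all δ₁, δ₂ ∈ ℝ, |ρ_τ^κ(δ₁) − ρ_τ^κ(δ₂)| ≤ max(τ, 1−τ)·|δ₁ − δ₂|. -/
import Mathlib

/-- The Huber quantile loss `ρ_τ^κ`. -/
noncomputable def huberQuantileLoss (τ κ δ : ℝ) : ℝ :=
  if |δ| ≤ κ then (1 / (2 * κ)) * |τ - (if δ < 0 then 1 else 0)| * δ ^ 2
  else |τ - (if δ < 0 then 1 else 0)| * (|δ| - κ / 2)

noncomputable def hkAux (κ x : ℝ) : ℝ := if x ≤ κ then x ^ 2 / (2 * κ) else x - κ / 2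

lemma hkAux_mono_lip (κ : ℝ) (hκ : 0 < κ) (x y : ℝ) (hy : 0 ≤ y) (hxy : y ≤ x) :
    0 ≤ hkAux κ x - hkAux κ y ∧ hkAux κ x - hkAux κ y ≤ x - y := by
  have h2κ : (0:ℝ) < 2 * κ := by linarith
  have hx : 0 ≤ x := le_trans hy hxy
  unfold hkAux
  split_ifs with h1 h2 h2
  · have e : x ^ 2 / (2 * κ) - y ^ 2 / (2 * κ) = (x ^ 2 - y ^ 2) / (2 * κ) := by ring
    constructor
    · rw [e]; apply div_nonneg _ h2κ.le; nlinarith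
    · rw [e, div_le_iff₀ h2κ]; nlinarith
  · exact absurd (le_trans hxy h1) h2
  · have ha : y ^ 2 / (2 * κ) ≤ κ / 2 := by rw [div_le_iff₀ h2κ]; nlinarith
    have hb : y - κ / 2 ≤ y ^ 2 / (2 * κ) := by
      rw [le_div_iff₀ h2κ]; nlinarith [sq_nonneg (y - κ)]
    constructor
    · push_neg at h1; nlinarith
    · nlinarith
  · constructor <;> linarith

lemma hkAux_lip (κ : ℝ) (hκ : 0 < κ) (x y : ℝ) (hx : 0 ≤ x) (hy : 0 ≤ y) :
    |hkAux κ x - hkAux κ y| ≤ |x - y| := by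
  rcases le_total y x with h | h
  · obtain ⟨h1, h2⟩ := hkAux_mono_lip κ hκ x y hy h
    rw [abs_of_nonneg h1, abs_of_nonneg (by linarith : (0:ℝ) ≤ x - y)]; exact h2
  · obtain ⟨h1, h2⟩ := hkAux_mono_lip κ hκ y x hx h
    rw [abs_sub_comm, abs_sub_comm x y, abs_of_nonneg h1,
      abs_of_nonneg (by linarith : (0:ℝ) ≤ y - x)]; exact h2

lemma huber_decomp (τ κ δ : ℝ) (hτ0 : 0 < τ) (hτ1 : τ < 1) (hκ : 0 < κ) :
    huberQuantileLoss τ κ δ = τ * hkAux κ (max δ 0) + (1 - τ) * hkAux κ (max (-δ) 0) := by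
  unfold huberQuantileLoss hkAux
  rcases lt_or_ge δ 0 with h | h
  · rw [abs_of_neg h, max_eq_right h.le, max_eq_left (by linarith)]
    have e : |τ - 1| = 1 - τ := by rw [abs_of_nonpos (by linarith)]; ring
    simp only [if_pos h, e]
    split_ifs with h1 h2 h2 <;> [skip; linarith; skip; linarith] <;> field_simp <;> ring
  · rw [abs_of_nonneg h, max_eq_left h, max_eq_right (by linarith)]
    have e : |τ - 0| = τ := by rw [sub_zero, abs_of_nonneg hτ0.le]
    simp only [if_neg (not_lt.mpr h), e]
    split_ifs with h1 h2 h2 <;> [skip; linarith; skip; linarith] <;> field_simp <;> ring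

/-- The Huber quantile loss is globally Lipschitz with constant `max τ (1-τ)`:
`|ρ_τ^κ(δ₁) − ρ_τ^κ(δ₂)| ≤ max τ (1−τ) · |δ₁ − δ₂|`. -/
theorem huberQuantileLoss_lipschitz (τ κ : ℝ) (hτ0 : 0 < τ) (hτ1 : τ < 1) (hκ : 0 < κ)
    (δ₁ δ₂ : ℝ) :
    |huberQuantileLoss τ κ δ₁ - huberQuantileLoss τ κ δ₂| ≤ max τ (1 - τ) * |δ₁ - δ₂| := by
  rw [huber_decomp τ κ δ₁ hτ0 hτ1 hκ, huber_decomp τ κ δ₂ hτ0 hτ1 hκ]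
  have h1 := hkAux_lip κ hκ (max δ₁ 0) (max δ₂ 0) (le_max_right _ _) (le_max_right _ _)
  have h2 := hkAux_lip κ hκ (max (-δ₁) 0) (max (-δ₂) 0) (le_max_right _ _) (le_max_right _ _)
  have key : |max δ₁ 0 - max δ₂ 0| + |max (-δ₁) 0 - max (-δ₂) 0| ≤ |δ₁ - δ₂| := by
    rcases le_total δ₁ 0 with ha | ha <;> rcases le_total δ₂ 0 with hb | hb
    · rw [max_eq_right ha, max_eq_right hb, max_eq_left (neg_nonneg.mpr ha),
        max_eq_left (neg_nonneg.mpr hb), sub_self, abs_zero, zero_add,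
        show -δ₁ - -δ₂ = -(δ₁ - δ₂) by ring, abs_neg]
    · rw [max_eq_right ha, max_eq_left hb, max_eq_left (neg_nonneg.mpr ha),
        max_eq_right (neg_nonpos.mpr hb), abs_of_nonpos (by linarith),
        abs_of_nonneg (by linarith), abs_of_nonpos (by linarith : δ₁ - δ₂ ≤ 0)]
      linarith
    · rw [max_eq_left ha, max_eq_right hb, max_eq_right (neg_nonpos.mpr ha),
        max_eq_left (neg_nonneg.mpr hb), abs_of_nonneg (by linarith),
        abs_of_nonpos (by linarith), abs_of_nonneg (by linarith : (0:ℝ) ≤ δ₁ - δ₂)]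
      linarith
    · rw [max_eq_left ha, max_eq_left hb, max_eq_right (neg_nonpos.mpr ha),
        max_eq_right (neg_nonpos.mpr hb), sub_self, abs_zero, add_zero]
  have hM1 : τ ≤ max τ (1 - τ) := le_max_left _ _
  have hM2 : 1 - τ ≤ max τ (1 - τ) := le_max_right _ _
  calc |(τ * hkAux κ (max δ₁ 0) + (1 - τ) * hkAux κ (max (-δ₁) 0)) -
        (τ * hkAux κ (max δ₂ 0) + (1 - τ) * hkAux κ (max (-δ₂) 0))|
      ≤ |τ * (hkAux κ (max δ₁ 0) - hkAux κ (max δ₂ 0))| +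
        |(1 - τ) * (hkAux κ (max (-δ₁) 0) - hkAux κ (max (-δ₂) 0))| := by
          rw [show (τ * hkAux κ (max δ₁ 0) + (1 - τ) * hkAux κ (max (-δ₁) 0)) -
            (τ * hkAux κ (max δ₂ 0) + (1 - τ) * hkAux κ (max (-δ₂) 0)) =
            τ * (hkAux κ (max δ₁ 0) - hkAux κ (max δ₂ 0)) +
            (1 - τ) * (hkAux κ (max (-δ₁) 0) - hkAux κ (max (-δ₂) 0)) by ring]
          exact abs_add_le _ _
    _ ≤ max τ (1 - τ) * |δ₁ - δ₂| := by
          rw [abs_mul, abs_mul, abs_of_pos hτ0, abs_of_pos (by linarith : (0:ℝ) < 1 - τ)]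
          nlinarith [mul_le_mul_of_nonneg_left h1 hτ0.le,
            mul_le_mul_of_nonneg_left h2 (by linarith : (0:ℝ) ≤ 1 - τ),
            mul_nonneg (sub_nonneg.mpr hM1) (abs_nonneg (max δ₁ 0 - max δ₂ 0)),
            mul_nonneg (sub_nonneg.mpr hM2) (abs_nonneg (max (-δ₁) 0 - max (-δ₂) 0)),
            mul_le_mul_of_nonneg_left key (le_trans hτ0.le hM1)]
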